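/- arXiv:1212.6556 — 3 statements merged into one kernel-verified Lean document; each statement's English description precedes it below -/
import Mathlib

section
/- Let $(x_i)_{i \geq 0}$ be a sequence of positive integers such that there exist $i_0 \geq 0$ and $N > 0$ with: for all $i \geq i_0$, there exists $1 \leq m_i \leq N$ with $x_{i + m_i} > x_i$. Then $\limsup_{k \to \infty} \frac{1}{k} \sum_{i=0}^{k-1} x_i = \infty$. -/
/-!
Following the hypothesis from `i0` produces indices `i0 = j 0 < j 1 < ⋯` with gaps at most `N`
on which `x` strictly increases, so `x (j k) ≥ k + 1`. About `K / N` of these indices lie below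
`K`, hence `∑_{i < K} x i` grows at least like `K² / (8 N²)` and the averages tend to infinity.
-/

open Filter Finset

section Chain

variable {x : ℕ → ℤ} {i0 N : ℕ} {g : ℕ → ℕ}
  (hg : ∀ i ≥ i0, i < g i ∧ g i ≤ i + N ∧ x i < x (g i))
include hg

lemma le_iterate_apply (k : ℕ) : i0 ≤ g^[k] i0 := by
  induction k with
  | zero => rfl
  | succ k ih =>
    rw [Function.iterate_succ_apply']
    exact ih.trans (hg _ ih).1.le

lemma strictMono_iterate_apply : StrictMono (fun k => g^[k] i0) :=
  strictMono_nat_of_lt_succ fun k => by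
    simpa only [Function.iterate_succ_apply'] using (hg _ (le_iterate_apply hg k)).1

lemma iterate_apply_le (k : ℕ) : g^[k] i0 ≤ i0 + k * N := by
  induction k with
  | zero => simp
  | succ k ih =>
    rw [Function.iterate_succ_apply', add_one_mul]
    linarith [(hg _ (le_iterate_apply hg k)).2.1]

lemma add_le_apply_iterate_apply (k : ℕ) : x i0 + k ≤ x (g^[k] i0) := by
  induction k with
  | zero => simp
  | succ k ih =>
    rw [Function.iterate_succ_apply']
    have := (hg _ (le_iterate_apply hg k)).2.2
    push_cast
    omega

end Chain

lemma sq_le_two_mul_sum_range_succ (t : ℕ) : (t : ℤ) * t ≤ 2 * ∑ k ∈ range t, ((k : ℤ) + 1) := by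
  induction t with
  | zero => simp
  | succ t ih =>
    rw [sum_range_succ]
    push_cast
    linarith

lemma sum_comp_le_sum_range {M : Type*} [AddCommMonoid M] [PartialOrder M]
    [IsOrderedAddMonoid M] {x : ℕ → M} (hx : ∀ i, 0 ≤ x i) {j : ℕ → ℕ} (hj : StrictMono j)
    {t K : ℕ} (hjt : ∀ k < t, j k < K) :
    ∑ k ∈ range t, x (j k) ≤ ∑ i ∈ range K, x i := by
  rw [← sum_image fun a _ b _ hab => hj.injective hab]
  refine sum_le_sum_of_subset_of_nonneg ?_ fun i _ _ => hx i
  intro i hi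
  obtain ⟨k, hk, rfl⟩ := mem_image.mp hi
  exact mem_range.mpr (hjt k (mem_range.mp hk))

lemma mul_self_le_mul_sum_range {x : ℕ → ℤ} (hpos : ∀ i, 0 < x i) {i0 N : ℕ} (hN : 0 < N)
    (h : ∀ i ≥ i0, ∃ m, 1 ≤ m ∧ m ≤ N ∧ x i < x (i + m)) {K : ℕ} (hK : 2 * (i0 + N) ≤ K) :
    (K : ℤ) * K ≤ 8 * N * N * ∑ i ∈ range K, x i := by
  choose! m hm1 hmN hmx using h
  have hg : ∀ i ≥ i0, i < i + m i ∧ i + m i ≤ i + N ∧ x i < x (i + m i) := fun i hi =>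
    ⟨by linarith [hm1 i hi], by linarith [hmN i hi], hmx i hi⟩
  set t := (K - i0) / N
  have hKt : K ≤ 2 * (N * t) := by
    have : N * t + (K - i0) % N = K - i0 := Nat.div_add_mod (K - i0) N
    have := Nat.mod_lt (K - i0) hN
    omega
  have hjK : ∀ k < t, (fun i => i + m i)^[k] i0 < K := fun k hk => by
    have := iterate_apply_le hg k
    have : k * N < t * N := Nat.mul_lt_mul_of_pos_right hk hN
    have : t * N ≤ K - i0 := Nat.div_mul_le_self (K - i0) N
    omega
  have hsum : (t : ℤ) * t ≤ 2 * ∑ i ∈ range K, x i := calc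
    (t : ℤ) * t ≤ 2 * ∑ k ∈ range t, ((k : ℤ) + 1) := sq_le_two_mul_sum_range_succ t
    _ ≤ 2 * ∑ k ∈ range t, x ((fun i => i + m i)^[k] i0) := by
      gcongr with k
      linarith [add_le_apply_iterate_apply hg k, hpos i0]
    _ ≤ 2 * ∑ i ∈ range K, x i := by
      gcongr
      exact sum_comp_le_sum_range (fun i => (hpos i).le) (strictMono_iterate_apply hg) hjK
  have hKt' : (K : ℤ) ≤ 2 * (N * t) := by exact_mod_cast hKt
  calc (K : ℤ) * K ≤ (2 * (N * t)) * (2 * (N * t)) := mul_self_le_mul_self (by positivity) hKt'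
    _ = 4 * N * N * (t * t) := by ring
    _ ≤ 4 * N * N * (2 * ∑ i ∈ range K, x i) := by gcongr
    _ = 8 * N * N * ∑ i ∈ range K, x i := by ring

lemma tendsto_div_atTop_of_mul_mul_self_le {S : ℕ → ℝ} {c : ℝ} (hc : 0 < c)
    (h : ∀ᶠ K : ℕ in atTop, c * (K * K) ≤ S K) :
    Tendsto (fun K => S K / K) atTop atTop := by
  refine tendsto_atTop_mono' _ ?_ (tendsto_natCast_atTop_atTop.const_mul_atTop hc)
  filter_upwards [h, eventually_gt_atTop 0] with K hK hK0
  rw [le_div_iff₀ (by positivity)]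
  linarith

theorem stmt_5 (x : ℕ → ℤ) (hpos : ∀ i, 0 < x i)
    (i0 N : ℕ) (hN : 0 < N)
    (h : ∀ i ≥ i0, ∃ m, 1 ≤ m ∧ m ≤ N ∧ x i < x (i + m)) :
    Filter.limsup
        (fun k => (((∑ i ∈ Finset.range k, x i : ℤ) : ℝ) / k : EReal))
        Filter.atTop = ⊤ := by
  have hNR : (0 : ℝ) < 8 * N * N := by positivity
  have hgrowth : ∀ᶠ K : ℕ in atTop,
      (8 * N * N : ℝ)⁻¹ * (K * K) ≤ ((∑ i ∈ range K, x i : ℤ) : ℝ) := by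
    filter_upwards [eventually_ge_atTop (2 * (i0 + N))] with K hK
    rw [inv_mul_le_iff₀ hNR]
    exact_mod_cast mul_self_le_mul_sum_range hpos hN h hK
  have hreal := tendsto_div_atTop_of_mul_mul_self_le (inv_pos.mpr hNR) hgrowth
  refine (EReal.tendsto_coe_atTop.comp hreal).congr (fun K => ?_) |>.limsup_eq
  simp [EReal.coe_div]
end

section
/- Let $(x_i)_{i \geq 0}$ be a sequence of integers such that (i) there exists $W < \infty$ with $|x_{i+1} - x_i| \leq W$ for all $i \geq 0$, and (ii) there exist $i_0 \geq 0$ and $N > 0$ such that for all $i \geq i_0$, there exists $1 \leq m_i \leq N$ with $x_{i + m_i} < x_i$. Then there exists $M \geq 0$ such that $x_i \leq 0$ for all $i \geq M$. -/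
theorem stmt_6 (x : ℕ → ℤ) (W : ℤ)
    (hW : ∀ i, |x (i + 1) - x i| ≤ W)
    (i0 N : ℕ) (hN : 0 < N)
    (h : ∀ i ≥ i0, ∃ m, 1 ≤ m ∧ m ≤ N ∧ x (i + m) < x i) :
    ∃ M : ℕ, ∀ i ≥ M, x i ≤ 0 := by
  have hW0 : 0 ≤ W := le_trans (abs_nonneg _) (hW 0)
  -- step bound: x (b + d) ≤ x b + d * W
  have step : ∀ b d : ℕ, x (b + d) ≤ x b + (d : ℤ) * W := by
    intro b d
    induction d with
    | zero => simp
    | succ d ih =>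
      have h1 : x (b + d + 1) - x (b + d) ≤ W := (abs_le.mp (hW (b + d))).2
      have : x (b + (d + 1)) ≤ x (b + d) + W := by
        have : b + (d + 1) = b + d + 1 := by ring
        rw [this]; linarith
      push_cast
      linarith
  -- total choice function
  have h' : ∀ i, ∃ m, 1 ≤ m ∧ m ≤ N ∧ (i0 ≤ i → x (i + m) < x i) := by
    intro i
    by_cases hi : i0 ≤ i
    · obtain ⟨m, hm1, hm2, hm3⟩ := h i hi
      exact ⟨m, hm1, hm2, fun _ => hm3⟩
    · exact ⟨1, le_refl _, hN, fun c => absurd c hi⟩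
  choose m hm1 hm2 hm3 using h'
  -- the chain
  set j : ℕ → ℕ := fun k => Nat.rec i0 (fun _ p => p + m p) k with hj
  have hj0 : j 0 = i0 := rfl
  have hjs : ∀ k, j (k + 1) = j k + m (j k) := fun k => rfl
  have hge : ∀ k, i0 ≤ j k := by
    intro k
    induction k with
    | zero => simp [hj0]
    | succ k ih => rw [hjs]; omega
  have hub : ∀ k, j k ≤ i0 + k * N := by
    intro k
    induction k with
    | zero => simp [hj0]
    | succ k ih =>
      have := hm2 (j k)
      rw [hjs]
      calc j k + m (j k) ≤ i0 + k * N + N := by omega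
        _ = i0 + (k + 1) * N := by ring
  have hlb : ∀ k, i0 + k ≤ j k := by
    intro k
    induction k with
    | zero => simp [hj0]
    | succ k ih =>
      have := hm1 (j k)
      rw [hjs]; omega
  have hstepN : ∀ k, j (k + 1) ≤ j k + N := by
    intro k; rw [hjs]; have := hm2 (j k); omega
  have hdec : ∀ k, x (j k) ≤ x i0 - k := by
    intro k
    induction k with
    | zero => simp [hj0]
    | succ k ih =>
      have h3 := hm3 (j k) (hge k)
      rw [hjs]
      push_cast
      omega
  set K : ℕ := (x i0 + N * W).toNat with hK
  refine ⟨i0 + (K + 1) * N, fun i hi => ?_⟩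
  -- find the largest k with j k ≤ i
  have hex : ∃ n, i < j n := by
    refine ⟨i + 1 - i0, ?_⟩
    have := hlb (i + 1 - i0)
    omega
  obtain ⟨k, hik, hik1⟩ : ∃ k, j k ≤ i ∧ i < j (k + 1) := by
    have hfind := Nat.find_spec hex
    have hn1 : 1 ≤ Nat.find hex := by
      rcases Nat.eq_zero_or_pos (Nat.find hex) with h0 | h1
      · rw [h0, hj0] at hfind; omega
      · exact h1
    refine ⟨Nat.find hex - 1, ?_, ?_⟩
    · by_contra hc
      push_neg at hc
      have h4 : Nat.find hex ≤ Nat.find hex - 1 := Nat.find_le (h := hex) hc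
      omega
    · have : Nat.find hex - 1 + 1 = Nat.find hex := by omega
      rw [this]; exact hfind
  have hKk : K ≤ k := by
    have h1 : j (k + 1) ≤ i0 + (k + 1) * N := hub (k + 1)
    have h2 : (K + 1) * N < (k + 1) * N := by omega
    have h3 : K + 1 < k + 1 := Nat.lt_of_mul_lt_mul_right h2
    omega
  -- distance bound
  have hdist : i - j k ≤ N := by
    have := hstepN k
    omega
  have hxi : x i ≤ x (j k) + (N : ℤ) * W := by
    have h1 : x i ≤ x (j k) + ((i - j k : ℕ) : ℤ) * W := by
      have := step (j k) (i - j k)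
      rwa [Nat.add_sub_cancel' hik] at this
    have h2 : ((i - j k : ℕ) : ℤ) * W ≤ (N : ℤ) * W := by
      apply mul_le_mul_of_nonneg_right _ hW0
      exact_mod_cast hdist
    linarith
  have hjk : x (j k) ≤ x i0 - k := hdec k
  have hKle : x i0 + (N : ℤ) * W ≤ (K : ℤ) := by
    rw [hK]
    exact Int.self_le_toNat _
  have hkK : (K : ℤ) ≤ (k : ℤ) := by exact_mod_cast hKk
  linarith
end

section
/- Let $\rho$ be an infinite path in a finite weighted directed graph with weights $w : E \to \mathbb{Z}$, and suppose there exist $i_0 \geq 0$ and $N > 0$ such that for all $i \geq i_0$ there exists $1 \leq m_i \leq N$ with $\mathrm{EL}(\rho(i)) < \mathrm{EL}(\rho(i + m_i))$, where $\mathrm{EL}(\rho(n))$ is the sum of the first $n$ edge weights. Then $\limsup_{n \to \infty} \frac{1}{n} \sum_{i=0}^{n} \max(0, -\mathrm{EL}(\rho(i))) = 0$, i.e., the average debit level of $\rho$ is zero. -/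
theorem stmt_19 {Q : Type*} [Fintype Q]
    (E : Q → Q → Prop) (w : Q → Q → ℤ)
    (ρ : ℕ → Q) (hρ : ∀ i, E (ρ i) (ρ (i + 1)))
    (i0 N : ℕ) (hN : 0 < N)
    (h : ∀ i ≥ i0, ∃ m, 1 ≤ m ∧ m ≤ N ∧
      (∑ j ∈ Finset.range i, w (ρ j) (ρ (j + 1))) <
        ∑ j ∈ Finset.range (i + m), w (ρ j) (ρ (j + 1))) :
    Filter.limsup
        (fun n =>
          ((((∑ i ∈ Finset.range (n + 1),
              max 0 (-(∑ j ∈ Finset.range i, w (ρ j) (ρ (j + 1)))) : ℤ) : ℝ) / n : ℝ) : EReal))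
        Filter.atTop = 0 := by
  set EL : ℕ → ℤ := fun n => ∑ j ∈ Finset.range n, w (ρ j) (ρ (j + 1)) with hEL
  -- bound on weights
  set C : ℤ := ∑ p : Q, ∑ q : Q, |w p q| with hC
  have hC0 : 0 ≤ C := Finset.sum_nonneg fun p _ => Finset.sum_nonneg fun q _ => abs_nonneg _
  have hw : ∀ j : ℕ, |w (ρ j) (ρ (j + 1))| ≤ C := by
    intro j
    calc |w (ρ j) (ρ (j + 1))| ≤ ∑ q : Q, |w (ρ j) q| :=
          Finset.single_le_sum (f := fun q => |w (ρ j) q|) (fun q _ => abs_nonneg _) (Finset.mem_univ _)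
      _ ≤ C := Finset.single_le_sum (f := fun p => ∑ q : Q, |w p q|)
          (fun p _ => Finset.sum_nonneg fun q _ => abs_nonneg _) (Finset.mem_univ _)
  have hELstep : ∀ i t : ℕ, EL i - t * C ≤ EL (i + t) := by
    intro i t
    induction t with
    | zero => simp
    | succ t ih =>
        have : EL (i + (t + 1)) = EL (i + t) + w (ρ (i + t)) (ρ (i + t + 1)) := by
          simp [hEL, ← add_assoc, Finset.sum_range_succ]
        have h1 := neg_abs_le (w (ρ (i + t)) (ρ (i + t + 1)))
        have h2 := hw (i + t)
        push_cast
        push_cast at ih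
        linarith
  -- step function
  have step_ex : ∀ i, i0 ≤ i → ∃ m, 1 ≤ m ∧ m ≤ N ∧ EL i < EL (i + m) := h
  classical
  set step : ℕ → ℕ := fun i => if h' : i0 ≤ i then i + (step_ex i h').choose else i + 1
    with hstep
  have step_prop : ∀ i, i0 ≤ i → step i ≤ i + N ∧ i < step i ∧ EL i < EL (step i) := by
    intro i hi
    have := (step_ex i hi).choose_spec
    simp only [hstep, dif_pos hi]
    exact ⟨by omega, by omega, this.2.2⟩
  set a : ℕ → ℕ := fun k => step^[k] i0 with ha
  have ha0 : a 0 = i0 := rfl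
  have hasucc : ∀ k, a (k + 1) = step (a k) := by
    intro k; simp [ha, Function.iterate_succ_apply']
  have hage : ∀ k, i0 ≤ a k := by
    intro k
    induction k with
    | zero => simp [ha0]
    | succ k ih =>
        rw [hasucc]
        have := (step_prop (a k) ih).2.1
        omega
  have halt : ∀ k, a k < a (k + 1) := fun k => by
    rw [hasucc]; exact (step_prop (a k) (hage k)).2.1
  have haN : ∀ k, a (k + 1) ≤ a k + N := fun k => by
    rw [hasucc]; exact (step_prop (a k) (hage k)).1
  have hamono : StrictMono a := strictMono_nat_of_lt_succ halt
  have haEL : ∀ k, EL i0 + k ≤ EL (a k) := by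
    intro k
    induction k with
    | zero => simp [ha0]
    | succ k ih =>
        have := (step_prop (a k) (hage k)).2.2
        rw [hasucc]; push_cast; push_cast at ih; linarith
  have haunb : ∀ k, i0 + k ≤ a k := by
    intro k
    induction k with
    | zero => simp [ha0]
    | succ k ih => have := halt k; omega
  -- eventually EL j ≥ 0
  set K : ℕ := (N * C - EL i0).toNat with hK
  have hKge : (N : ℤ) * C - EL i0 ≤ (K : ℤ) := Int.self_le_toNat _
  have hMain : ∀ j, a K ≤ j → 0 ≤ EL j := by
    intro j hj
    have hji0 : i0 ≤ j := le_trans (hage K) hj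
    -- find k with a k ≤ j < a (k+1)
    have hne : ∃ k, j < a k := ⟨j + 1, by have := haunb (j + 1); omega⟩
    set k' := Nat.find hne with hk'
    have hk'spec : j < a k' := Nat.find_spec hne
    have hk'pos : 0 < k' := by
      rcases Nat.eq_zero_or_pos k' with h0 | h0
      · exfalso; have := hk'spec; rw [h0, ha0] at this; omega
      · exact h0
    set k := k' - 1 with hkdef
    have hk1 : k + 1 = k' := by omega
    have hkle : a k ≤ j := by
      by_contra hcon
      push_neg at hcon
      exact Nat.find_min hne (show k < k' by omega) hcon
    have hklt : j < a (k + 1) := by rw [hk1]; exact hk'spec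
    have hKk : K ≤ k := by
      by_contra hcon
      push_neg at hcon
      have : a (k + 1) ≤ a K := hamono.le_iff_le.mpr (by omega)
      omega
    -- EL j ≥ EL (a k) - N * C
    obtain ⟨t, ht⟩ : ∃ t, j = a k + t := ⟨j - a k, by omega⟩
    have htN : t ≤ N := by have := haN k; omega
    have h1 : EL (a k) - t * C ≤ EL j := ht ▸ hELstep (a k) t
    have h2 : (t : ℤ) * C ≤ (N : ℤ) * C := by
      apply mul_le_mul_of_nonneg_right _ hC0
      exact_mod_cast htN
    have h3 := haEL k
    have h4 : (K : ℤ) ≤ (k : ℤ) := by exact_mod_cast hKk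
    linarith
  -- partial sums eventually constant
  set M := a K with hM
  set S : ℤ := ∑ i ∈ Finset.range M, max 0 (-(EL i)) with hS
  have hsum : ∀ n, M ≤ n → (∑ i ∈ Finset.range (n + 1), max 0 (-(EL i))) = S := by
    intro n hn
    rw [hS]
    symm
    apply Finset.sum_subset
    · intro x hx; simp at hx ⊢; omega
    · intro x _ hx
      simp only [Finset.mem_range, not_lt] at hx
      have := hMain x hx
      simp [max_eq_left]; omega
  -- tendsto
  have htend : Filter.Tendsto
      (fun n : ℕ =>
        ((((∑ i ∈ Finset.range (n + 1), max 0 (-(EL i)) : ℤ) : ℝ) / n : ℝ) : EReal))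
      Filter.atTop (nhds 0) := by
    have h1 : Filter.Tendsto (fun n : ℕ => ((S : ℝ) / n : ℝ)) Filter.atTop (nhds 0) :=
      tendsto_const_div_atTop_nhds_zero_nat _
    have h2 : Filter.Tendsto
        (fun n : ℕ => ((∑ i ∈ Finset.range (n + 1), max 0 (-(EL i)) : ℤ) : ℝ) / n)
        Filter.atTop (nhds 0) := by
      apply Filter.Tendsto.congr' _ h1
      filter_upwards [Filter.eventually_ge_atTop M] with n hn
      rw [hsum n hn]
    have : nhds (0 : EReal) = nhds ((0 : ℝ) : EReal) := by norm_num
    rw [this]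
    exact (EReal.tendsto_coe.mpr h2)
  exact htend.limsup_eq
end
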